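/- If a nonzero formal power series φ in d variables has a polygonal Newton polyhedron (every compact face has dimension at most one), then any irreducible factor of φ that is not associated to one of the variables X_1, …, X_d also has a polygonal Newton polyhedron. -/

import Mathlib

/-- The Newton polyhedron of a power series `φ = Σ c_a X^a` in `d` variables. -/
noncomputable def newtonPolyhedron {d : ℕ} (φ : MvPowerSeries (Fin d) ℂ) :
    Set (Fin d → ℝ) :=
  convexHull ℝ {x | ∃ a : Fin d →₀ ℕ,
    MvPowerSeries.coeff a φ ≠ 0 ∧ ∀ i, (a i : ℝ) ≤ x i}

/-- A polyhedron is polygonal if all its (nonempty) compact faces have dimension at most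
one; faces are taken to be exposed faces. -/
def IsPolygonal {d : ℕ} (N : Set (Fin d → ℝ)) : Prop :=
  ∀ F : Set (Fin d → ℝ), IsExposed ℝ N F → IsCompact F → F.Nonempty →
    Module.finrank ℝ (vectorSpan ℝ F) ≤ 1

/-!
A strictly positive weight `w` cuts out of a Newton polyhedron the compact face spanned by the
exponents of minimal `w`-weight, and every compact exposed face arises this way: a functional
that is not strictly positive on the coordinate directions has an unbounded set of minimizers.
For `φ = ψ * χ` the lowest-weight parts multiply, and refining them by a further linear form `g`
shows that the spread `max g - min g` over the face of `φ` is the sum of the spreads over the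
faces of `ψ` and `χ`. So a linear form that is constant on the face of `φ` is constant on the
face of `ψ`, and the face of `ψ` has dimension at most that of the face of `φ`.
-/

open Pointwise

def minSet {α β : Type*} [Preorder β] (f : α → β) (s : Set α) : Set α :=
  {x ∈ s | IsMinOn f s x}

section MinSet

variable {α β : Type*}

theorem minSet_subset [Preorder β] (f : α → β) (s : Set α) : minSet f s ⊆ s :=
  fun _ hx => hx.1

theorem Set.Finite.minSet_nonempty [LinearOrder β] {s : Set α} (hs : s.Finite)
    (hne : s.Nonempty) (f : α → β) : (minSet f s).Nonempty := by
  obtain ⟨a, ha, hmin⟩ := s.exists_min_image f hs hne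
  exact ⟨a, ha, hmin⟩

theorem Northcott.minSet_nonempty [LinearOrder β] (f : α → β) [Northcott f] {s : Set α}
    (hne : s.Nonempty) : (minSet f s).Nonempty := by
  obtain ⟨a, ha, hmin⟩ := Northcott.exists_min_image f s hne
  exact ⟨a, ha, hmin⟩

theorem Northcott.minSet_finite [Preorder β] (f : α → β) [Northcott f] (s : Set α) :
    (minSet f s).Finite := by
  rcases s.eq_empty_or_nonempty with rfl | ⟨a, ha⟩
  · exact Set.finite_empty.subset (minSet_subset f ∅)
  · exact (Northcott.finite_le (f a)).subset fun x hx => hx.2 ha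

theorem minSet_image {γ : Type*} [Preorder β] (f : α → β) (g : γ → α) (s : Set γ) :
    minSet f (g '' s) = g '' minSet (f ∘ g) s := by
  ext x
  constructor
  · rintro ⟨⟨y, hy, rfl⟩, hmin⟩
    exact ⟨y, ⟨hy, fun z hz => hmin (Set.mem_image_of_mem g hz)⟩, rfl⟩
  · rintro ⟨y, ⟨hy, hmin⟩, rfl⟩
    exact ⟨Set.mem_image_of_mem g hy, Set.forall_mem_image.mpr hmin⟩

theorem minSet_upperClosure [PartialOrder α] [Preorder β] {f : α → β} (hf : StrictMono f)
    (s : Set α) : minSet f (upperClosure s : Set α) = minSet f s := by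
  ext x
  constructor
  · rintro ⟨⟨a, ha, hax⟩, hmin⟩
    obtain rfl : a = x := by
      by_contra hne
      exact (hf (lt_of_le_of_ne hax hne)).not_ge (hmin (subset_upperClosure ha))
    exact ⟨ha, fun b hb => hmin (subset_upperClosure hb)⟩
  · rintro ⟨hx, hmin⟩
    refine ⟨subset_upperClosure hx, ?_⟩
    rintro y ⟨a, ha, hay⟩
    exact (hmin ha).trans (hf.monotone hay)

theorem minSet_convexHull {E : Type*} [AddCommGroup E] [Module ℝ E] (f : E →ₗ[ℝ] ℝ)
    {s : Set E} (hne : (minSet f s).Nonempty) :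
    minSet f (convexHull ℝ s) = convexHull ℝ (minSet f s) := by
  obtain ⟨a, ha, hamin⟩ := hne
  have hlow : ∀ x ∈ convexHull ℝ s, f a ≤ f x :=
    convexHull_min (fun x hx => hamin hx) (convex_halfSpace_ge f.isLinear (f a))
  have hlevel : ∀ t, (∀ x ∈ t, f a ≤ f x) → a ∈ t → minSet f t = {x ∈ t | f x ≤ f a} := by
    intro t ht hat
    ext x
    exact ⟨fun hx => ⟨hx.1, hx.2 hat⟩, fun hx => ⟨hx.1, fun y hy => hx.2.trans (ht y hy)⟩⟩
  rw [hlevel _ hlow (subset_convexHull ℝ s ha), hlevel s (fun x hx => hamin hx) ha]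
  apply Set.Subset.antisymm
  · -- a convex combination with positive coefficients lies on the level `f a` only if
    -- all the points combined do
    let C := {x | f a ≤ f x ∧ (f x ≤ f a → x ∈ convexHull ℝ {x ∈ s | f x ≤ f a})}
    have hC : Convex ℝ C := by
      refine convex_iff_forall_pos.mpr fun x hx y hy u v hu hv huv => ?_
      have hfz : f (u • x + v • y) =
          u * f a + v * f a + (u * (f x - f a) + v * (f y - f a)) := by
        simp only [map_add, map_smul, smul_eq_mul]; ring
      have hux : 0 ≤ u * (f x - f a) := mul_nonneg hu.le (sub_nonneg.mpr hx.1)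
      have hvy : 0 ≤ v * (f y - f a) := mul_nonneg hv.le (sub_nonneg.mpr hy.1)
      show f a ≤ f (u • x + v • y) ∧ (f (u • x + v • y) ≤ f a → _)
      rw [hfz, ← add_mul, huv, one_mul]
      refine ⟨by linarith, fun hle => ?_⟩
      have hxa : f x ≤ f a := by nlinarith
      have hya : f y ≤ f a := by nlinarith
      exact convex_convexHull ℝ _ (hx.2 hxa) (hy.2 hya) hu.le hv.le huv
    have hsC : s ⊆ C := fun y hy => ⟨hamin hy, fun hya => subset_convexHull ℝ _ ⟨hy, hya⟩⟩
    rintro x ⟨hx, hxa⟩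
    exact (convexHull_min hsC hC hx).2 hxa
  · exact convexHull_min (fun x hx => ⟨subset_convexHull ℝ s hx.1, hx.2⟩)
      ((convex_convexHull ℝ s).inter (convex_halfSpace_le f.isLinear (f a)))

theorem ContinuousLinearMap.toExposed_eq_minSet_neg {E : Type*} [AddCommGroup E]
    [TopologicalSpace E] [Module ℝ E] (l : StrongDual ℝ E) (A : Set E) :
    l.toExposed A = minSet (⇑(-l)) A := by
  ext x
  simp [ContinuousLinearMap.toExposed, minSet, isMinOn_iff]

end MinSet

section AdditiveWeight

variable {M : Type*} [AddCommMonoid M] (f : M →+ ℝ) {s t : Set M} {a b : M}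

theorem mem_minSet_of_add_eq (ha : a ∈ minSet f s) (hb : b ∈ minSet f t) {x y : M}
    (hx : x ∈ s) (hy : y ∈ t) (h : x + y = a + b) : x ∈ minSet f s ∧ y ∈ minSet f t := by
  have hsum : f x + f y = f a + f b := by rw [← map_add, h, map_add]
  have hxa : f a ≤ f x := ha.2 hx
  have hyb : f b ≤ f y := hb.2 hy
  exact ⟨⟨hx, fun z hz => (show f x ≤ f a by linarith).trans (ha.2 hz)⟩,
    ⟨hy, fun z hz => (show f y ≤ f b by linarith).trans (hb.2 hz)⟩⟩

theorem add_mem_minSet_of_subset_add {u : Set M} (hu : u ⊆ s + t) (ha : a ∈ minSet f s)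
    (hb : b ∈ minSet f t) (hab : a + b ∈ u) : a + b ∈ minSet f u := by
  refine ⟨hab, fun z hz => ?_⟩
  obtain ⟨x, hx, y, hy, rfl⟩ := hu hz
  show f (a + b) ≤ f (x + y)
  rw [map_add, map_add]
  exact add_le_add (ha.2 hx) (hb.2 hy)

end AdditiveWeight

theorem vectorSpan_convexHull {E : Type*} [AddCommGroup E] [Module ℝ E] (s : Set E) :
    vectorSpan ℝ (convexHull ℝ s) = vectorSpan ℝ s := by
  rw [← direction_affineSpan, affineSpan_convexHull, direction_affineSpan]

theorem vectorSpan_le_of_forall_dual {K V : Type*} [Field K] [AddCommGroup V] [Module K V]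
    {s t : Set V}
    (h : ∀ f : Module.Dual K V, (∀ x ∈ t, ∀ y ∈ t, f x = f y) → ∀ x ∈ s, ∀ y ∈ s, f x = f y) :
    vectorSpan K s ≤ vectorSpan K t := by
  rw [← Subspace.dualAnnihilator_le_dualAnnihilator_iff]
  intro f hf
  rw [Submodule.mem_dualAnnihilator] at hf ⊢
  have hconst := h f fun x hx y hy => sub_eq_zero.mp (by
    rw [← map_sub]; exact hf _ (vsub_mem_vectorSpan K hx hy))
  intro z hz
  refine (Submodule.span_le (p := LinearMap.ker f)).mpr ?_ hz
  rintro _ ⟨x, hx, y, hy, rfl⟩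
  show f (x - y) = 0
  rw [map_sub, hconst x hx y hy, sub_self]

noncomputable def toRealVec {σ : Type*} : (σ →₀ ℕ) →+ (σ → ℝ) :=
  ((Nat.castAddMonoidHom ℝ).compLeft σ).comp Finsupp.coeFnAddHom

@[simp]
theorem toRealVec_apply {σ : Type*} (a : σ →₀ ℕ) (i : σ) : toRealVec a i = a i := rfl

noncomputable def LinearMap.expWeight {σ : Type*} (ℓ : (σ → ℝ) →ₗ[ℝ] ℝ) : (σ →₀ ℕ) →+ ℝ :=
  ℓ.toAddMonoidHom.comp toRealVec

section PositiveForm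

variable {σ : Type*} [Fintype σ] [DecidableEq σ]

theorem LinearMap.apply_eq_sum_mul_single (ℓ : (σ → ℝ) →ₗ[ℝ] ℝ) (x : σ → ℝ) :
    ℓ x = ∑ i, x i * ℓ (Pi.single i 1) := by
  conv_lhs => rw [pi_eq_sum_univ' x]
  simp only [map_sum, map_smul, smul_eq_mul]

variable {ℓ : (σ → ℝ) →ₗ[ℝ] ℝ}

theorem LinearMap.strictMono_of_apply_single_pos (hℓ : ∀ i, 0 < ℓ (Pi.single i 1)) :
    StrictMono ℓ := by
  intro x y hxy
  obtain ⟨hle, i, hi⟩ := Pi.lt_def.mp hxy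
  rw [← sub_pos, ← map_sub, ℓ.apply_eq_sum_mul_single]
  exact Finset.sum_pos' (fun j _ => mul_nonneg (sub_nonneg.mpr (hle j)) (hℓ j).le)
    ⟨i, Finset.mem_univ i, mul_pos (sub_pos.mpr hi) (hℓ i)⟩

theorem LinearMap.northcott_expWeight (hℓ : ∀ i, 0 < ℓ (Pi.single i 1)) :
    Northcott ℓ.expWeight where
  finite_le C := by
    refine (Set.finite_Iic
      (Finsupp.equivFunOnFinite.symm fun i => ⌊C / ℓ (Pi.single i 1)⌋₊)).subset fun a ha i => ?_
    refine Nat.le_floor ((le_div_iff₀ (hℓ i)).mpr (le_trans ?_ ha))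
    show (a i : ℝ) * ℓ (Pi.single i 1) ≤ ℓ (toRealVec a)
    rw [ℓ.apply_eq_sum_mul_single (toRealVec a)]
    exact Finset.single_le_sum (f := fun j => toRealVec a j * ℓ (Pi.single j 1))
      (fun j _ => mul_nonneg (Nat.cast_nonneg _) (hℓ j).le) (Finset.mem_univ i)

end PositiveForm

theorem ContinuousLinearMap.apply_single_neg_of_isCompact_toExposed {σ : Type*}
    [DecidableEq σ] (l : StrongDual ℝ (σ → ℝ)) {A : Set (σ → ℝ)}
    (hA : ∀ x ∈ A, ∀ v, 0 ≤ v → x + v ∈ A) (hc : IsCompact (l.toExposed A))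
    (hne : (l.toExposed A).Nonempty) (i : σ) : l (Pi.single i 1) < 0 := by
  by_contra! hli
  obtain ⟨x₀, hx₀A, hx₀max⟩ := hne
  obtain ⟨M, hM⟩ := (hc.image (continuous_apply i)).bddAbove
  set t := |M - x₀ i| + 1
  have hray : x₀ + t • Pi.single i 1 ∈ l.toExposed A := by
    refine ⟨hA _ hx₀A _ (smul_nonneg (by positivity) (Pi.single_nonneg.mpr zero_le_one)),
      fun y hy => (hx₀max y hy).trans ?_⟩
    rw [map_add, map_smul, smul_eq_mul]
    exact le_add_of_nonneg_right (mul_nonneg (by positivity) hli)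
  have hle : x₀ i + t ≤ M := by simpa using hM ⟨_, hray, rfl⟩
  linarith [le_abs_self (M - x₀ i)]

namespace MvPowerSeries

variable {σ R : Type*} [CommSemiring R]

def support (ρ : MvPowerSeries σ R) : Set (σ →₀ ℕ) := {a | coeff a ρ ≠ 0}

theorem support_nonempty {ρ : MvPowerSeries σ R} (hρ : ρ ≠ 0) : (support ρ).Nonempty :=
  (ne_zero_iff_exists_coeff_ne_zero ρ).mp hρ

theorem support_mul_subset (ψ χ : MvPowerSeries σ R) :
    support (ψ * χ) ⊆ support ψ + support χ := by
  classical
  intro a ha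
  obtain ⟨x, hx, hne⟩ :=
    Finset.exists_ne_zero_of_sum_ne_zero ((coeff_mul a ψ χ).symm.trans_ne ha)
  exact ⟨x.1, left_ne_zero_of_mul hne, x.2, right_ne_zero_of_mul hne,
    Finset.HasAntidiagonal.mem_antidiagonal.mp hx⟩

theorem coeff_mul_eq_coeff_truncFinset_mul (W₁ W₂ : Finset (σ →₀ ℕ))
    {ψ χ : MvPowerSeries σ R} {a : σ →₀ ℕ}
    (h : ∀ x y, x + y = a → x ∈ support ψ → y ∈ support χ → x ∈ W₁ ∧ y ∈ W₂) :
    coeff a (ψ * χ) = (truncFinset R W₁ ψ * truncFinset R W₂ χ).coeff a := by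
  classical
  rw [coeff_mul, MvPolynomial.coeff_mul]
  refine Finset.sum_congr rfl fun x hx => ?_
  rw [coeff_truncFinset, coeff_truncFinset]
  by_cases hψ : coeff x.1 ψ = 0
  · simp [hψ]
  by_cases hχ : coeff x.2 χ = 0
  · simp [hχ]
  obtain ⟨h₁, h₂⟩ := h x.1 x.2 (Finset.HasAntidiagonal.mem_antidiagonal.mp hx) hψ hχ
  rw [if_pos h₁, if_pos h₂]

/-- The `g`-initial forms of the `v`-initial forms of `ψ` and `χ` are polynomials with nonzero
product, and every monomial of that product is a monomial of `ψ * χ`. -/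
theorem exists_add_mem_minSet_support_mul [NoZeroDivisors R] (v g : (σ →₀ ℕ) →+ ℝ)
    [Northcott v] {ψ χ : MvPowerSeries σ R} (hψ : ψ ≠ 0) (hχ : χ ≠ 0) :
    ∃ b ∈ minSet g (minSet v (support ψ)), ∃ c ∈ minSet g (minSet v (support χ)),
      b + c ∈ minSet v (support (ψ * χ)) := by
  classical
  have hfin : ∀ ρ : MvPowerSeries σ R, (minSet g (minSet v (support ρ))).Finite :=
    fun ρ => (Northcott.minSet_finite v _).subset (minSet_subset g _)
  set Wψ := (hfin ψ).toFinset
  set Wχ := (hfin χ).toFinset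
  have htrunc_ne : ∀ ρ : MvPowerSeries σ R, ρ ≠ 0 → truncFinset R (hfin ρ).toFinset ρ ≠ 0 := by
    intro ρ hρ
    obtain ⟨b, hb⟩ := (Northcott.minSet_finite v _).minSet_nonempty
      (Northcott.minSet_nonempty v (support_nonempty hρ)) g
    refine MvPolynomial.ne_zero_iff.mpr ⟨b, ?_⟩
    rw [coeff_truncFinset, if_pos ((hfin ρ).mem_toFinset.mpr hb)]
    exact hb.1.1
  obtain ⟨a, ha⟩ :=
    MvPolynomial.support_nonempty.mpr (mul_ne_zero (htrunc_ne ψ hψ) (htrunc_ne χ hχ))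
  obtain ⟨b, hb, c, hc, rfl⟩ := Finset.mem_add.mp (MvPolynomial.support_mul _ _ ha)
  have hbW : b ∈ minSet g (minSet v (support ψ)) := by
    by_contra h
    exact MvPolynomial.mem_support_iff.mp hb (by rw [coeff_truncFinset, if_neg (by simpa using h)])
  have hcW : c ∈ minSet g (minSet v (support χ)) := by
    by_contra h
    exact MvPolynomial.mem_support_iff.mp hc (by rw [coeff_truncFinset, if_neg (by simpa using h)])
  have hsplit : ∀ x y, x + y = b + c → x ∈ support ψ → y ∈ support χ → x ∈ Wψ ∧ y ∈ Wχ := by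
    intro x y hxy hx hy
    obtain ⟨hxv, hyv⟩ := mem_minSet_of_add_eq v hbW.1 hcW.1 hx hy hxy
    obtain ⟨hxg, hyg⟩ := mem_minSet_of_add_eq g hbW hcW hxv hyv hxy
    exact ⟨(hfin ψ).mem_toFinset.mpr hxg, (hfin χ).mem_toFinset.mpr hyg⟩
  refine ⟨b, hbW, c, hcW, add_mem_minSet_of_subset_add v (support_mul_subset ψ χ) hbW.1 hcW.1 ?_⟩
  show coeff (b + c) (ψ * χ) ≠ 0
  rw [coeff_mul_eq_coeff_truncFinset_mul Wψ Wχ hsplit]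
  exact MvPolynomial.mem_support_iff.mp ha

theorem vectorSpan_minSet_support_le_mul [NoZeroDivisors R] (v : (σ →₀ ℕ) →+ ℝ) [Northcott v]
    {ψ χ : MvPowerSeries σ R} (hψ : ψ ≠ 0) (hχ : χ ≠ 0) :
    vectorSpan ℝ (toRealVec '' minSet v (support ψ)) ≤
      vectorSpan ℝ (toRealVec '' minSet v (support (ψ * χ))) := by
  refine vectorSpan_le_of_forall_dual fun f hf => ?_
  set g : (σ →₀ ℕ) →+ ℝ := f.toAddMonoidHom.comp toRealVec
  obtain ⟨b₁, hb₁, c₁, hc₁, hbc₁⟩ := exists_add_mem_minSet_support_mul v g hψ hχ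
  obtain ⟨b₂, hb₂, c₂, hc₂, hbc₂⟩ := exists_add_mem_minSet_support_mul v (-g) hψ hχ
  have hsum : g b₁ + g c₁ = g b₂ + g c₂ := by
    simpa [g] using hf _ ⟨_, hbc₁, rfl⟩ _ ⟨_, hbc₂, rfl⟩
  have hb : g b₁ ≤ g b₂ := hb₁.2 hb₂.1
  have hc : g c₁ ≤ g c₂ := hc₁.2 hc₂.1
  have hconst : ∀ x ∈ minSet v (support ψ), g x = g b₁ := by
    intro x hx
    have h₁ : g b₁ ≤ g x := hb₁.2 hx
    have h₂ : -g b₂ ≤ -g x := hb₂.2 hx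
    linarith
  rintro _ ⟨x, hx, rfl⟩ _ ⟨y, hy, rfl⟩
  exact (hconst x hx).trans (hconst y hy).symm

end MvPowerSeries

section NewtonPolyhedron

variable {d : ℕ}

open MvPowerSeries

theorem newtonPolyhedron_eq_convexHull_upperClosure (ρ : MvPowerSeries (Fin d) ℂ) :
    newtonPolyhedron ρ =
      convexHull ℝ (upperClosure (toRealVec '' support ρ) : Set (Fin d → ℝ)) := by
  simp [newtonPolyhedron, upperClosure, support, Pi.le_def]

theorem add_mem_newtonPolyhedron {ρ : MvPowerSeries (Fin d) ℂ} {x v : Fin d → ℝ}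
    (hx : x ∈ newtonPolyhedron ρ) (hv : 0 ≤ v) : x + v ∈ newtonPolyhedron ρ := by
  rw [newtonPolyhedron_eq_convexHull_upperClosure] at hx ⊢
  have hup : (upperClosure (toRealVec '' support ρ) : Set (Fin d → ℝ)) + {v} ⊆
      upperClosure (toRealVec '' support ρ) := by
    rintro _ ⟨y, hy, _, rfl, rfl⟩
    exact (upperClosure _).upper (le_add_of_nonneg_right hv) hy
  refine convexHull_mono hup ?_
  rw [convexHull_add, convexHull_singleton]
  exact Set.add_mem_add hx rfl

theorem minSet_newtonPolyhedron {ℓ : (Fin d → ℝ) →ₗ[ℝ] ℝ} (hℓ : ∀ i, 0 < ℓ (Pi.single i 1))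
    {ρ : MvPowerSeries (Fin d) ℂ} (hρ : ρ ≠ 0) :
    minSet ℓ (newtonPolyhedron ρ) = convexHull ℝ (toRealVec '' minSet ℓ.expWeight (support ρ)) := by
  have := ℓ.northcott_expWeight hℓ
  have hlow : minSet ℓ (upperClosure (toRealVec '' support ρ) : Set (Fin d → ℝ)) =
      toRealVec '' minSet ℓ.expWeight (support ρ) := by
    rw [minSet_upperClosure (ℓ.strictMono_of_apply_single_pos hℓ), minSet_image]
    rfl
  have hne : (toRealVec '' minSet ℓ.expWeight (support ρ)).Nonempty :=
    (Northcott.minSet_nonempty _ (support_nonempty hρ)).image _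
  rw [newtonPolyhedron_eq_convexHull_upperClosure, minSet_convexHull ℓ (hlow ▸ hne), hlow]

end NewtonPolyhedron

theorem stmt3_general {d : ℕ} (φ ψ : MvPowerSeries (Fin d) ℂ) (hφ : φ ≠ 0)
    (hpoly : IsPolygonal (newtonPolyhedron φ))
    (hdvd : ψ ∣ φ) :
    IsPolygonal (newtonPolyhedron ψ) := by
  rintro F hF hFc hFne
  obtain ⟨l, rfl⟩ := hF hFne
  obtain ⟨χ, rfl⟩ := hdvd
  obtain ⟨hψ, hχ⟩ := mul_ne_zero_iff.mp hφ
  set ℓ : (Fin d → ℝ) →ₗ[ℝ] ℝ := ↑(-l)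
  have hℓ : ∀ i, 0 < ℓ (Pi.single i 1) := fun i => neg_pos.mpr
    (l.apply_single_neg_of_isCompact_toExposed (fun _ hx _ => add_mem_newtonPolyhedron hx)
      hFc hFne i)
  have := ℓ.northcott_expWeight hℓ
  have hface : ∀ ρ : MvPowerSeries (Fin d) ℂ, ρ ≠ 0 → l.toExposed (newtonPolyhedron ρ) =
      convexHull ℝ (toRealVec '' minSet ℓ.expWeight (MvPowerSeries.support ρ)) :=
    fun ρ hρ => (l.toExposed_eq_minSet_neg _).trans (minSet_newtonPolyhedron hℓ hρ)
  have hG := hpoly _ ContinuousLinearMap.toExposed.isExposed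
    (by rw [hface _ hφ]; exact ((Northcott.minSet_finite _ _).image _).isCompact_convexHull ℝ)
    (by rw [hface _ hφ, convexHull_nonempty_iff]
        exact (Northcott.minSet_nonempty _ (MvPowerSeries.support_nonempty hφ)).image _)
  rw [hface _ hφ, vectorSpan_convexHull] at hG
  show Module.finrank ℝ (vectorSpan ℝ (l.toExposed (newtonPolyhedron ψ))) ≤ 1
  rw [hface _ hψ, vectorSpan_convexHull]
  exact (Submodule.finrank_mono (MvPowerSeries.vectorSpan_minSet_support_le_mul _ hψ hχ)).trans hG

/-- If a nonzero power series `φ` in `d` variables has a polygonal Newton polyhedron,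
then any irreducible factor of `φ` not associated to one of the variables also has a
polygonal Newton polyhedron. -/
theorem stmt3 {d : ℕ} (φ ψ : MvPowerSeries (Fin d) ℂ) (hφ : φ ≠ 0)
    (hpoly : IsPolygonal (newtonPolyhedron φ))
    (hψ : Irreducible ψ) (hdvd : ψ ∣ φ)
    (hnot : ∀ i : Fin d, ¬ Associated ψ (MvPowerSeries.X i)) :
    IsPolygonal (newtonPolyhedron ψ) :=
  stmt3_general φ ψ hφ hpoly hdvd
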